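/- Let p and q be unimodal probability mass functions on ℕ₀ with corresponding random variables X, Y. Then X ≤_wd Y if and only if for every m ∈ ℕ₀, the sum of the m+1 largest values of p is at least the sum of the m+1 largest values of q (i.e., q is majorized by p). -/

import Mathlib

open MeasureTheory Set Filter
open scoped ENNReal NNReal

/-- The Lévy concentration function of a distribution `μ` on `ℝ`. -/
noncomputable def levyQ (μ : Measure ℝ) (ε : ℝ) : ℝ≥0∞ :=
  ⨆ x₀ : ℝ, μ (Set.Icc x₀ (x₀ + ε))

/-- `wdLE μ ν` : `Q_μ(ε) ≥ Q_ν(ε)` for all `ε > 0`. -/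
def wdLE (μ ν : Measure ℝ) : Prop :=
  ∀ ε : ℝ, 0 < ε → levyQ ν ε ≤ levyQ μ ε

/-- The distribution on `ℝ` of an `ℕ`-valued random variable with pmf `p`. -/
noncomputable def discMeasure (p : ℕ → ℝ≥0∞) : Measure ℝ :=
  Measure.sum (fun k : ℕ => p k • Measure.dirac (k : ℝ))

/-- Sum of the  largest values of , as the supremum of sums over
-element subsets. -/
noncomputable def largestSum (p : ℕ → ℝ≥0∞) (k : ℕ) : ℝ≥0∞ :=
  ⨆ (s : Finset ℕ) (_ : s.card = k), ∑ i ∈ s, p i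

/--  is a unimodal pmf on . -/
def Unimodal (p : ℕ → ℝ≥0∞) : Prop :=
  ∃ M : ℕ, (∀ k < M, p k ≤ p (k + 1)) ∧ (∀ k ≥ M, p (k + 1) ≤ p k)

section aux

variable {p : ℕ → ℝ≥0∞} {M : ℕ}

lemma mono_of_uni (h1 : ∀ k < M, p k ≤ p (k + 1)) :
    ∀ i j, i ≤ j → j ≤ M → p i ≤ p j := by
  intro i j hij hjM
  obtain ⟨d, rfl⟩ := Nat.exists_eq_add_of_le hij
  clear hij
  induction d with
  | zero => simp
  | succ n ih =>
    have h1' : i + n < M := by omega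
    calc p i ≤ p (i + n) := ih (by omega)
      _ ≤ p (i + n + 1) := h1 _ h1'
      _ = p (i + (n+1)) := by ring_nf

lemma anti_of_uni (h2 : ∀ k ≥ M, p (k + 1) ≤ p k) :
    ∀ i j, M ≤ i → i ≤ j → p j ≤ p i := by
  intro i j hMi hij
  obtain ⟨d, rfl⟩ := Nat.exists_eq_add_of_le hij
  clear hij
  induction d with
  | zero => simp
  | succ n ih =>
    calc p (i + (n+1)) = p (i + n + 1) := by ring_nf
      _ ≤ p (i + n) := h2 _ (by omega)
      _ ≤ p i := ih

/-- For a unimodal sequence there is a window of `k` consecutive indices that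
pointwise dominates everything outside. -/
lemma exists_window (h1 : ∀ k < M, p k ≤ p (k + 1)) (h2 : ∀ k ≥ M, p (k + 1) ≤ p k)
    (k : ℕ) :
    ∃ a, a ≤ M ∧ M ≤ a + k ∧
      ∀ i ∉ Finset.Ico a (a + k), ∀ j ∈ Finset.Ico a (a + k), p i ≤ p j := by
  induction k with
  | zero =>
    exact ⟨M, le_rfl, by omega, fun i _ j hj => by simp at hj⟩
  | succ k ih =>
    obtain ⟨a, haM, hMa, hinv⟩ := ih
    by_cases hc : a ≠ 0 ∧ p (a + k) ≤ p (a - 1)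
    · -- extend the window to the left
      obtain ⟨ha0, hle⟩ := hc
      refine ⟨a - 1, by omega, by omega, ?_⟩
      intro i hi j hj
      simp only [Finset.mem_Ico] at hi hj
      have hj' : j = a - 1 ∨ (a ≤ j ∧ j < a + k) := by omega
      rcases hj' with rfl | hj'
      · -- j = a - 1
        rcases (by omega : i < a - 1 ∨ a + k ≤ i) with hi' | hi'
        · exact mono_of_uni h1 i (a - 1) (by omega) (by omega)
        · calc p i ≤ p (a + k) := anti_of_uni h2 (a + k) i hMa hi'
            _ ≤ p (a - 1) := hle
      · exact hinv i (by simp only [Finset.mem_Ico]; omega)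
          j (by simp only [Finset.mem_Ico]; omega)
    · -- extend the window to the right
      refine ⟨a, haM, by omega, ?_⟩
      intro i hi j hj
      simp only [Finset.mem_Ico] at hi hj
      have hj' : j = a + k ∨ (a ≤ j ∧ j < a + k) := by omega
      rcases hj' with rfl | hj'
      · rcases (by omega : i < a ∨ a + k + 1 ≤ i) with hi' | hi'
        · have ha0 : a ≠ 0 := by omega
          have hlt : ¬ p (a + k) ≤ p (a - 1) := by
            intro h; exact hc ⟨ha0, h⟩
          calc p i ≤ p (a - 1) := mono_of_uni h1 i (a - 1) (by omega) (by omega)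
            _ ≤ p (a + k) := le_of_not_ge hlt
        · exact anti_of_uni h2 (a + k) i hMa (by omega)
      · exact hinv i (by simp only [Finset.mem_Ico]; omega)
          j (by simp only [Finset.mem_Ico]; omega)

/-- Exchange argument: a window dominating everything outside has the largest
sum among sets of the same size. -/
lemma sum_le_window (p : ℕ → ℝ≥0∞) (t : Finset ℕ)
    (ht : ∀ i ∉ t, ∀ j ∈ t, p i ≤ p j) (s : Finset ℕ) (hcard : s.card = t.card) :
    ∑ i ∈ s, p i ≤ ∑ i ∈ t, p i := by
  classical
  have hd : (s \ t).card = (t \ s).card := Finset.card_sdiff_comm hcard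
  have key : ∑ i ∈ s \ t, p i ≤ ∑ i ∈ t \ s, p i := by
    let e := Finset.equivOfCardEq hd
    calc ∑ i ∈ s \ t, p i = ∑ i : {x // x ∈ s \ t}, p i.1 :=
          (Finset.sum_coe_sort _ _).symm
      _ ≤ ∑ i : {x // x ∈ s \ t}, p (e i).1 := by
          refine Finset.sum_le_sum fun i _ => ?_
          have hi : (i : ℕ) ∉ t := (Finset.mem_sdiff.1 i.2).2
          have hj : ((e i : ℕ)) ∈ t := (Finset.mem_sdiff.1 (e i).2).1
          exact ht i hi _ hj
      _ = ∑ j : {x // x ∈ t \ s}, p j.1 := Equiv.sum_comp e (fun j => p j.1)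
      _ = ∑ i ∈ t \ s, p i := Finset.sum_coe_sort _ _
  calc ∑ i ∈ s, p i = ∑ i ∈ s ∩ t, p i + ∑ i ∈ s \ t, p i :=
        (Finset.sum_inter_add_sum_sdiff s t p).symm
    _ ≤ ∑ i ∈ t ∩ s, p i + ∑ i ∈ t \ s, p i := by
        rw [Finset.inter_comm]; exact add_le_add le_rfl key
    _ = ∑ i ∈ t, p i := Finset.sum_inter_add_sum_sdiff t s p

lemma discMeasure_apply (p : ℕ → ℝ≥0∞) {s : Set ℝ} (hs : MeasurableSet s) :
    discMeasure p s = ∑' k : ℕ, p k * s.indicator 1 (k : ℝ) := by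
  rw [discMeasure, Measure.sum_apply _ hs]
  refine tsum_congr fun k => ?_
  rw [Measure.smul_apply, Measure.dirac_apply' _ hs, smul_eq_mul]

/-- Upper bound for the concentration function: an interval of length `ε`
contains at most `⌊ε⌋ + 1` naturals. -/
lemma levyQ_le (p : ℕ → ℝ≥0∞) {ε : ℝ} (hε : 0 ≤ ε) :
    levyQ (discMeasure p) ε ≤ largestSum p (⌊ε⌋₊ + 1) := by
  refine iSup_le fun x₀ => ?_
  rw [discMeasure_apply p measurableSet_Icc]
  by_cases hneg : x₀ + ε < 0
  · have : ∀ k : ℕ, p k * (Set.Icc x₀ (x₀ + ε)).indicator 1 (k : ℝ) = 0 := by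
      intro k
      have : (k : ℝ) ∉ Set.Icc x₀ (x₀ + ε) := by
        simp only [Set.mem_Icc, not_and_or]
        right
        have : (0:ℝ) ≤ k := Nat.cast_nonneg k
        linarith
      rw [Set.indicator_of_notMem this, mul_zero]
    rw [tsum_eq_sum (s := ∅) (fun b _ => this b)]
    simp
  push_neg at hneg
  set S : Finset ℕ := Finset.Icc ⌈x₀⌉₊ ⌊x₀ + ε⌋₊ with hS
  have hmem : ∀ k : ℕ, (k : ℝ) ∈ Set.Icc x₀ (x₀ + ε) ↔ k ∈ S := by
    intro k
    simp only [hS, Set.mem_Icc, Finset.mem_Icc, Nat.ceil_le, Nat.le_floor_iff hneg]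
  have hsum : ∑' k : ℕ, p k * (Set.Icc x₀ (x₀ + ε)).indicator 1 (k : ℝ)
      = ∑ k ∈ S, p k := by
    rw [tsum_eq_sum (s := S) (fun b hb => ?_)]
    · refine Finset.sum_congr rfl fun k hk => ?_
      rw [Set.indicator_of_mem ((hmem k).2 hk)]
      simp
    · rw [Set.indicator_of_notMem (fun h => hb ((hmem b).1 h)), mul_zero]
  rw [hsum]
  -- the cardinality of S is at most ⌊ε⌋ + 1
  have hcard : S.card ≤ ⌊ε⌋₊ + 1 := by
    rw [hS, Nat.card_Icc]
    have hfloor : ⌊x₀ + ε⌋₊ ≤ ⌈x₀⌉₊ + ⌊ε⌋₊ := by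
      have h1 : x₀ + ε ≤ (⌈x₀⌉₊ : ℝ) + ε := by
        have := Nat.le_ceil x₀; linarith
      calc ⌊x₀ + ε⌋₊ ≤ ⌊(⌈x₀⌉₊ : ℝ) + ε⌋₊ := Nat.floor_mono h1
        _ = ⌊ε + (⌈x₀⌉₊ : ℝ)⌋₊ := by rw [add_comm]
        _ = ⌊ε⌋₊ + ⌈x₀⌉₊ := Nat.floor_add_natCast hε _
        _ = ⌈x₀⌉₊ + ⌊ε⌋₊ := by omega
    omega
  obtain ⟨T, hST, hT⟩ := Infinite.exists_superset_card_eq S (⌊ε⌋₊ + 1) hcard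
  calc ∑ k ∈ S, p k ≤ ∑ k ∈ T, p k :=
        Finset.sum_le_sum_of_subset hST
    _ ≤ largestSum p (⌊ε⌋₊ + 1) := by
        rw [largestSum]
        exact le_iSup₂ (f := fun (s : Finset ℕ) (_ : s.card = ⌊ε⌋₊ + 1) => ∑ i ∈ s, p i) T hT

/-- Lower bound for the concentration function of a unimodal distribution. -/
lemma le_levyQ (p : ℕ → ℝ≥0∞) (hp : Unimodal p) {ε : ℝ} {m : ℕ}
    (hm : (m : ℝ) ≤ ε) :
    largestSum p (m + 1) ≤ levyQ (discMeasure p) ε := by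
  obtain ⟨M, h1, h2⟩ := hp
  obtain ⟨a, _, _, hwin⟩ := exists_window h1 h2 (m + 1)
  set t : Finset ℕ := Finset.Ico a (a + (m + 1)) with htdef
  have htcard : t.card = m + 1 := by rw [htdef, Nat.card_Ico]; omega
  have hsum_le : largestSum p (m + 1) ≤ ∑ i ∈ t, p i := by
    rw [largestSum]
    refine iSup₂_le fun s hs => sum_le_window p t hwin s (by rw [htcard, hs])
  refine hsum_le.trans ?_
  -- the window sum is at most the measure of [a, a + ε]
  have hmeas : ∑ i ∈ t, p i ≤ discMeasure p (Set.Icc (a : ℝ) ((a : ℝ) + ε)) := by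
    rw [discMeasure_apply p measurableSet_Icc]
    calc ∑ i ∈ t, p i
        = ∑ i ∈ t, p i * (Set.Icc (a : ℝ) ((a : ℝ) + ε)).indicator 1 (i : ℝ) := by
          refine Finset.sum_congr rfl fun i hi => ?_
          rw [htdef, Finset.mem_Ico] at hi
          have hmem : (i : ℝ) ∈ Set.Icc (a : ℝ) ((a : ℝ) + ε) := by
            constructor
            · exact_mod_cast Nat.cast_le.2 hi.1
            · have hi' : (i : ℝ) ≤ (a : ℝ) + m := by
                have : i ≤ a + m := by omega
                push_cast
                exact_mod_cast Nat.cast_le.2 this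
              linarith
          rw [Set.indicator_of_mem hmem]
          simp
      _ ≤ ∑' i : ℕ, p i * (Set.Icc (a : ℝ) ((a : ℝ) + ε)).indicator 1 (i : ℝ) :=
          ENNReal.sum_le_tsum t
  refine hmeas.trans ?_
  exact le_iSup (fun x₀ : ℝ => discMeasure p (Set.Icc x₀ (x₀ + ε))) (a : ℝ)

end aux

theorem wdLE_iff_majorization_of_unimodal
    (p q : ℕ → ℝ≥0∞) (hp1 : ∑' k, p k = 1) (hq1 : ∑' k, q k = 1)
    (hp : Unimodal p) (hq : Unimodal q) :
    wdLE (discMeasure p) (discMeasure q) ↔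
      ∀ m : ℕ, largestSum q (m + 1) ≤ largestSum p (m + 1) := by
  constructor
  · intro h m
    have hε : (0:ℝ) < (m : ℝ) + 1/2 := by positivity
    have hfloor : ⌊(m : ℝ) + 1/2⌋₊ = m := by
      rw [Nat.floor_eq_iff (by positivity)]
      refine ⟨by linarith, ?_⟩
      push_cast
      linarith
    calc largestSum q (m + 1) ≤ levyQ (discMeasure q) ((m : ℝ) + 1/2) :=
          le_levyQ q hq (by linarith)
      _ ≤ levyQ (discMeasure p) ((m : ℝ) + 1/2) := h _ hε
      _ ≤ largestSum p (⌊(m : ℝ) + 1/2⌋₊ + 1) := levyQ_le p hε.le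
      _ = largestSum p (m + 1) := by rw [hfloor]
  · intro h ε hε
    calc levyQ (discMeasure q) ε ≤ largestSum q (⌊ε⌋₊ + 1) := levyQ_le q hε.le
      _ ≤ largestSum p (⌊ε⌋₊ + 1) := h _
      _ ≤ levyQ (discMeasure p) ε := le_levyQ p hp (Nat.floor_le hε.le)
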